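/- Let M be an N×N primitive nonnegative real matrix with primitivity index ℓ, let τ := τ(M^ℓ) be the Birkhoff coefficient of M^ℓ, ρ_M the Perron eigenvalue, v_M ∈ Δ_N the right Perron eigenvector and w_M the left Perron eigenvector with w_M^⊤ v_M = 1. Then for every x ∈ Δ_N, every m ∈ ℕ and every coordinate i: exp(−τ^{⌊m/ℓ⌋}·d_M(x)/(1−τ)) ≤ (M^m x)(i) / (ρ_M^m·(w_M^⊤ x)·v_M(i)) ≤ exp(τ^{⌊m/ℓ⌋}·d_M(x)/(1−τ)), where d_M(x) := min(ℓ·d(x, F_M x), d(x, F_M^ℓ x)). -/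

import Mathlib

open scoped BigOperators

namespace PerronApprox

/-- The open simplex `Δ_N`. -/
def simplex (N : ℕ) : Set (Fin N → ℝ) :=
  {x | (∀ i, 0 < x i) ∧ ∑ i, x i = 1}

/-- The projective (Hilbert) distance. -/
noncomputable def projDist {N : ℕ} (x y : Fin N → ℝ) : ℝ :=
  Real.log ((⨆ i, x i / y i) / (⨅ i, x i / y i))

/-- The normalized action `F_M x = Mx / |Mx|₁` of a matrix on the simplex. -/
noncomputable def FM {N : ℕ} (M : Matrix (Fin N) (Fin N) ℝ) (x : Fin N → ℝ) :
    Fin N → ℝ :=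
  fun i => M.mulVec x i / ∑ j, M.mulVec x j

open Classical in
/-- `Γ(M)` for a positive matrix (and `0` otherwise). -/
noncomputable def birkGamma {N : ℕ} (M : Matrix (Fin N) (Fin N) ℝ) : ℝ :=
  if ∀ i j, 0 < M i j then
    ⨅ i, ⨅ j, ⨅ k, ⨅ l, Real.sqrt (M i j * M k l / (M i l * M k j))
  else 0

/-- The Birkhoff contraction coefficient `τ(M) = (1 − Γ(M))/(1 + Γ(M))`. -/
noncomputable def birkTau {N : ℕ} (M : Matrix (Fin N) (Fin N) ℝ) : ℝ :=
  (1 - birkGamma M) / (1 + birkGamma M)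

/-- `d_M(x) = min (ℓ · d(x, F_M x), d(x, F_M^ℓ x))`. -/
noncomputable def dMin {N : ℕ} (M : Matrix (Fin N) (Fin N) ℝ) (ℓ : ℕ)
    (x : Fin N → ℝ) : ℝ :=
  min ((ℓ : ℝ) * projDist x (FM M x)) (projDist x ((FM M)^[ℓ] x))

/-- `M` is primitive with primitivity index `ℓ`. -/
def PrimIndex {N : ℕ} (M : Matrix (Fin N) (Fin N) ℝ) (ℓ : ℕ) : Prop :=
  0 < ℓ ∧ (∀ i j, 0 < (M ^ ℓ) i j) ∧
    ∀ k, 0 < k → k < ℓ → ¬ ∀ i j, 0 < (M ^ k) i j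

/-!
A positive matrix `A` contracts the projective distance by `τ(A)` (Birkhoff). In two rows `i, k`,
comparing `Ax` with `Ay` compares two weighted means of the ratios `x j / y j`, with weights
`A i j y j` and `A k j y j` whose cross-ratios are at least `Γ(A)²`; pushing every ratio to an end of
its range leaves a two-level problem, which reduces to `(s + Γ)/(sΓ + 1) ≤ s^τ` for `s ≥ 1`.

For `A = M^ℓ` the Perron vector `v` spans a fixed ray, so `d(A^q x, v) ≤ d(A^q x, A^{q+1} x) +
τ d(A^q x, v)` gives `d(A^q x, v) ≤ τ^q d(x, Ax)/(1 - τ)`; the remaining factor `M^(m mod ℓ)` is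
nonexpansive, and `d(x, Ax) ≤ d_M(x)`. Finally, since `w ⬝ᵥ v = 1` and
`w ⬝ᵥ M^m x = ρ^m (w ⬝ᵥ x)`, every coordinate of `M^m x` lies within a factor `exp (± d(M^m x, v))`
of `ρ^m (w ⬝ᵥ x) v`.
-/

section ProjDist

variable {N : ℕ} [Nonempty (Fin N)] {x y z : Fin N → ℝ}

lemma projDist_le_iff (hx : ∀ i, 0 < x i) (hy : ∀ i, 0 < y i) {c : ℝ} :
    projDist x y ≤ c ↔ ∀ i k, x i * y k ≤ Real.exp c * (y i * x k) := by
  have hr : ∀ i, 0 < x i / y i := fun i => div_pos (hx i) (hy i)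
  obtain ⟨i₀, hi₀⟩ := exists_eq_ciInf_of_finite (f := fun i => x i / y i)
  have hI : 0 < ⨅ i, x i / y i := hi₀ ▸ hr i₀
  have hS : 0 < ⨆ i, x i / y i :=
    (hr i₀).trans_le (le_ciSup (f := fun i => x i / y i) (Set.finite_range _).bddAbove i₀)
  have hratio : ∀ i k,
      x i * y k ≤ Real.exp c * (y i * x k) ↔ x i / y i ≤ Real.exp c * (x k / y k) := by
    intro i k
    rw [div_le_iff₀ (hy i), mul_div_assoc', div_mul_eq_mul_div, le_div_iff₀ (hy k)]
    ring_nf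
  simp only [hratio]
  rw [projDist, Real.log_le_iff_le_exp (div_pos hS hI), div_le_iff₀ hI]
  constructor
  · intro h i k
    calc x i / y i ≤ ⨆ i, x i / y i :=
          le_ciSup (f := fun i => x i / y i) (Set.finite_range _).bddAbove i
      _ ≤ Real.exp c * ⨅ i, x i / y i := h
      _ ≤ Real.exp c * (x k / y k) :=
        mul_le_mul_of_nonneg_left (ciInf_le (Set.finite_range _).bddBelow k) (Real.exp_pos c).le
  · intro h
    rw [← div_le_iff₀' (Real.exp_pos c)]
    exact le_ciInf fun k => (div_le_iff₀' (Real.exp_pos c)).2 (ciSup_le fun i => h i k)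

lemma mul_le_exp_projDist_mul (hx : ∀ i, 0 < x i) (hy : ∀ i, 0 < y i) (i k : Fin N) :
    x i * y k ≤ Real.exp (projDist x y) * (y i * x k) :=
  (projDist_le_iff hx hy).1 le_rfl i k

lemma projDist_nonneg (hx : ∀ i, 0 < x i) (hy : ∀ i, 0 < y i) : 0 ≤ projDist x y := by
  have i : Fin N := Classical.arbitrary _
  have h := mul_le_exp_projDist_mul hx hy i i
  rw [mul_comm (y i)] at h
  exact Real.one_le_exp_iff.1 (le_of_mul_le_mul_right (by linarith) (mul_pos (hx i) (hy i)))

lemma exists_forall_div_mem_Icc (hx : ∀ i, 0 < x i) (hy : ∀ i, 0 < y i) :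
    ∃ a, 0 < a ∧ ∀ j, a ≤ x j / y j ∧ x j / y j ≤ a * Real.exp (projDist x y) := by
  obtain ⟨j₀, hj₀⟩ := Finite.exists_min fun j => x j / y j
  refine ⟨_, div_pos (hx j₀) (hy j₀), fun j => ⟨hj₀ j, ?_⟩⟩
  rw [mul_comm, mul_div_assoc', div_le_div_iff₀ (hy j) (hy j₀)]
  linarith [mul_le_exp_projDist_mul hx hy j j₀]

lemma projDist_self (hx : ∀ i, 0 < x i) : projDist x x = 0 := by
  simp [projDist, div_self (hx _).ne']

lemma projDist_triangle (hx : ∀ i, 0 < x i) (hy : ∀ i, 0 < y i) (hz : ∀ i, 0 < z i) :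
    projDist x z ≤ projDist x y + projDist y z := by
  refine (projDist_le_iff hx hz).2 fun i k => ?_
  have hyik := mul_pos (hy i) (hy k)
  refine le_of_mul_le_mul_right ?_ hyik
  calc x i * z k * (y i * y k) = (x i * y k) * (y i * z k) := by ring
    _ ≤ (Real.exp (projDist x y) * (y i * x k)) * (Real.exp (projDist y z) * (z i * y k)) :=
      mul_le_mul (mul_le_exp_projDist_mul hx hy i k) (mul_le_exp_projDist_mul hy hz i k)
        (mul_pos (hy i) (hz k)).le (mul_pos (Real.exp_pos _) (mul_pos (hy i) (hx k))).le
    _ = Real.exp (projDist x y + projDist y z) * (z i * x k) * (y i * y k) := by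
      rw [Real.exp_add]; ring

lemma projDist_smul_right (hx : ∀ i, 0 < x i) (hy : ∀ i, 0 < y i) {c : ℝ} (hc : 0 < c) :
    projDist x (c • y) = projDist x y := by
  have hcy : ∀ i, 0 < (c • y) i := fun i => mul_pos hc (hy i)
  have key : ∀ t, projDist x (c • y) ≤ t ↔ projDist x y ≤ t := by
    intro t
    simp only [projDist_le_iff hx hcy, projDist_le_iff hx hy, Pi.smul_apply, smul_eq_mul]
    refine forall₂_congr fun i k => ?_
    rw [mul_left_comm, mul_assoc c, mul_left_comm _ c]
    exact mul_le_mul_iff_right₀ hc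
  exact eq_of_forall_ge_iff key

lemma div_dotProduct_mul_mem_Icc {z v w : Fin N → ℝ} (hz : ∀ i, 0 < z i) (hv : ∀ i, 0 < v i)
    (hw : ∀ i, 0 ≤ w i) (hwv : w ⬝ᵥ v = 1) (i : Fin N) :
    z i / ((w ⬝ᵥ z) * v i) ∈ Set.Icc (Real.exp (-projDist z v)) (Real.exp (projDist z v)) := by
  set e := Real.exp (projDist z v)
  have hupper : z i ≤ e * ((w ⬝ᵥ z) * v i) := by
    calc z i = z i * (w ⬝ᵥ v) := by rw [hwv, mul_one]
      _ = ∑ k, w k * (z i * v k) := by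
          rw [dotProduct, Finset.mul_sum]; exact Finset.sum_congr rfl fun k _ => by ring
      _ ≤ ∑ k, w k * (e * (v i * z k)) := Finset.sum_le_sum fun k _ =>
          mul_le_mul_of_nonneg_left (mul_le_exp_projDist_mul hz hv i k) (hw k)
      _ = e * ((w ⬝ᵥ z) * v i) := by
          rw [dotProduct, Finset.sum_mul, Finset.mul_sum]
          exact Finset.sum_congr rfl fun k _ => by ring
  have hlower : (w ⬝ᵥ z) * v i ≤ e * z i := by
    calc (w ⬝ᵥ z) * v i = ∑ k, w k * (z k * v i) := by
          rw [dotProduct, Finset.sum_mul]; exact Finset.sum_congr rfl fun k _ => by ring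
      _ ≤ ∑ k, w k * (e * (v k * z i)) := Finset.sum_le_sum fun k _ =>
          mul_le_mul_of_nonneg_left (mul_le_exp_projDist_mul hz hv k i) (hw k)
      _ = e * z i := by
          rw [← mul_one (e * z i), ← hwv, dotProduct, Finset.mul_sum]
          exact Finset.sum_congr rfl fun k _ => by ring
  have hpos : 0 < (w ⬝ᵥ z) * v i :=
    pos_of_mul_pos_right ((hz i).trans_le hupper) (Real.exp_pos _).le
  rw [Set.mem_Icc, le_div_iff₀ hpos, div_le_iff₀ hpos, Real.exp_neg,
    inv_mul_le_iff₀ (Real.exp_pos _)]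
  exact ⟨hlower, hupper⟩

end ProjDist

open scoped Matrix

section NonnegMatrix

variable {N : ℕ} {M : Matrix (Fin N) (Fin N) ℝ}

lemma pow_mulVec_of_mulVec_eq_smul {ρ : ℝ} {v : Fin N → ℝ} (h : M *ᵥ v = ρ • v) (n : ℕ) :
    (M ^ n) *ᵥ v = ρ ^ n • v := by
  induction n with
  | zero => simp
  | succ n ih => rw [pow_succ, ← Matrix.mulVec_mulVec, h, Matrix.mulVec_smul, ih, smul_smul,
    ← pow_succ']

lemma vecMul_pow_of_vecMul_eq_smul {ρ : ℝ} {w : Fin N → ℝ} (h : w ᵥ* M = ρ • w) (n : ℕ) :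
    w ᵥ* (M ^ n) = ρ ^ n • w := by
  induction n with
  | zero => simp
  | succ n ih => rw [pow_succ', ← Matrix.vecMul_vecMul, h, Matrix.smul_vecMul, ih, smul_smul,
    ← pow_succ']

lemma exists_pos_of_pow_pos [Nonempty (Fin N)] (hM : ∀ i j, 0 ≤ M i j) {ℓ : ℕ} (hℓ : 0 < ℓ)
    (hpos : ∀ i j, 0 < (M ^ ℓ) i j) (i : Fin N) : ∃ j, 0 < M i j := by
  by_contra! h
  obtain ⟨n, rfl⟩ := Nat.exists_eq_add_one_of_ne_zero hℓ.ne'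
  have j₀ : Fin N := Classical.arbitrary _
  refine (hpos i j₀).ne' ?_
  rw [pow_succ', Matrix.mul_apply]
  exact Finset.sum_eq_zero fun l _ => by rw [(h l).antisymm (hM i l), zero_mul]

variable {x y : Fin N → ℝ}

lemma mulVec_pos (hM : ∀ i j, 0 ≤ M i j) (hrow : ∀ i, ∃ j, 0 < M i j) (hx : ∀ i, 0 < x i)
    (i : Fin N) : 0 < (M *ᵥ x) i := by
  obtain ⟨j, hj⟩ := hrow i
  exact Finset.sum_pos' (fun l _ => mul_nonneg (hM i l) (hx l).le)
    ⟨j, Finset.mem_univ j, mul_pos hj (hx j)⟩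

lemma pow_mulVec_pos (hM : ∀ i j, 0 ≤ M i j) (hrow : ∀ i, ∃ j, 0 < M i j) (hx : ∀ i, 0 < x i)
    (n : ℕ) (i : Fin N) : 0 < ((M ^ n) *ᵥ x) i := by
  induction n generalizing i with
  | zero => simpa using hx i
  | succ n ih => rw [pow_succ', ← Matrix.mulVec_mulVec]; exact mulVec_pos hM hrow ih i

variable [Nonempty (Fin N)]

lemma projDist_mulVec_le (hM : ∀ i j, 0 ≤ M i j) (hrow : ∀ i, ∃ j, 0 < M i j)
    (hx : ∀ i, 0 < x i) (hy : ∀ i, 0 < y i) :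
    projDist (M *ᵥ x) (M *ᵥ y) ≤ projDist x y := by
  refine (projDist_le_iff (mulVec_pos hM hrow hx) (mulVec_pos hM hrow hy)).2 fun i k => ?_
  simp only [Matrix.mulVec, dotProduct]
  rw [Finset.sum_mul_sum, Finset.sum_mul_sum, Finset.mul_sum]
  refine Finset.sum_le_sum fun j _ => ?_
  rw [Finset.mul_sum]
  refine Finset.sum_le_sum fun l _ => ?_
  calc M i j * x j * (M k l * y l) = M i j * M k l * (x j * y l) := by ring
    _ ≤ M i j * M k l * (Real.exp (projDist x y) * (y j * x l)) :=
      mul_le_mul_of_nonneg_left (mul_le_exp_projDist_mul hx hy j l)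
        (mul_nonneg (hM i j) (hM k l))
    _ = Real.exp (projDist x y) * (M i j * y j * (M k l * x l)) := by ring

lemma projDist_pow_mulVec_le (hM : ∀ i j, 0 ≤ M i j) (hrow : ∀ i, ∃ j, 0 < M i j)
    (hx : ∀ i, 0 < x i) (hy : ∀ i, 0 < y i) (n : ℕ) :
    projDist ((M ^ n) *ᵥ x) ((M ^ n) *ᵥ y) ≤ projDist x y := by
  induction n with
  | zero => simp
  | succ n ih =>
    rw [pow_succ', ← Matrix.mulVec_mulVec, ← Matrix.mulVec_mulVec]
    exact (projDist_mulVec_le hM hrow (pow_mulVec_pos hM hrow hx n)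
      (pow_mulVec_pos hM hrow hy n)).trans ih

lemma projDist_pow_mulVec_self_le (hM : ∀ i j, 0 ≤ M i j) (hrow : ∀ i, ∃ j, 0 < M i j)
    (hx : ∀ i, 0 < x i) (n : ℕ) :
    projDist x ((M ^ n) *ᵥ x) ≤ n * projDist x (M *ᵥ x) := by
  induction n with
  | zero => simp [projDist_self hx]
  | succ n ih =>
    have hMx := mulVec_pos hM hrow hx
    calc projDist x ((M ^ (n + 1)) *ᵥ x)
        ≤ projDist x (M *ᵥ x) + projDist (M *ᵥ x) (M *ᵥ ((M ^ n) *ᵥ x)) := by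
          rw [Matrix.mulVec_mulVec, ← pow_succ']
          exact projDist_triangle hx hMx (pow_mulVec_pos hM hrow hx _)
      _ ≤ projDist x (M *ᵥ x) + n * projDist x (M *ᵥ x) := by
          gcongr
          exact (projDist_mulVec_le hM hrow hx (pow_mulVec_pos hM hrow hx n)).trans ih
      _ = (n + 1 : ℕ) * projDist x (M *ᵥ x) := by push_cast; ring

end NonnegMatrix

lemma add_le_mul_add_one_mul_exp {Γ s : ℝ} (hΓ₀ : 0 ≤ Γ) (hΓ₁ : Γ ≤ 1) (hs : 1 ≤ s) :
    s + Γ ≤ (s * Γ + 1) * Real.exp ((1 - Γ) / (1 + Γ) * Real.log s) := by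
  set τ := (1 - Γ) / (1 + Γ)
  let g : ℝ → ℝ := fun t => τ * Real.log t + Real.log (t * Γ + 1) - Real.log (t + Γ)
  have hderiv : ∀ t, 0 < t →
      HasDerivAt g (τ * t⁻¹ + Γ / (t * Γ + 1) - 1 / (t + Γ)) t := by
    intro t ht
    have h₁ : HasDerivAt (fun t => t * Γ + 1) Γ t := by
      simpa using ((hasDerivAt_id t).mul_const Γ).add_const 1
    have h₂ : HasDerivAt (fun t => t + Γ) 1 t := (hasDerivAt_id t).add_const Γ
    exact (((Real.hasDerivAt_log ht.ne').const_mul τ).add (h₁.log (by positivity))).sub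
      (by simpa using h₂.log (by positivity))
  have hmono : MonotoneOn g (Set.Ici 1) := by
    refine monotoneOn_of_hasDerivWithinAt_nonneg (convex_Ici 1)
      (fun t ht => (hderiv t (by linarith [Set.mem_Ici.1 ht])).continuousAt.continuousWithinAt)
      (fun t ht => (hderiv t ?_).hasDerivWithinAt) fun t ht => ?_
    · rw [interior_Ici] at ht; linarith [Set.mem_Ioi.1 ht]
    · rw [interior_Ici] at ht
      have ht₀ : 0 < t := by linarith [Set.mem_Ioi.1 ht]
      have hgap : τ * t⁻¹ + Γ / (t * Γ + 1) - 1 / (t + Γ)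
          = (1 - Γ) * Γ * (t - 1) ^ 2 / ((1 + Γ) * t * (t * Γ + 1) * (t + Γ)) := by
        simp only [τ]
        field_simp
        ring
      rw [hgap]
      have : 0 ≤ 1 - Γ := by linarith
      positivity
  have hg : g 1 ≤ g s := hmono Set.self_mem_Ici hs hs
  have hlog : Real.log (s + Γ) ≤ Real.log (s * Γ + 1) + τ * Real.log s := by
    simp only [g, Real.log_one, mul_zero, zero_add, one_mul, add_comm 1 Γ, sub_self] at hg
    linarith
  calc s + Γ = Real.exp (Real.log (s + Γ)) := (Real.exp_log (by positivity)).symm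
    _ ≤ Real.exp (Real.log (s * Γ + 1) + τ * Real.log s) := Real.exp_le_exp.2 hlog
    _ = (s * Γ + 1) * Real.exp (τ * Real.log s) := by
      rw [Real.exp_add, Real.exp_log (by positivity)]

lemma two_level_bound {Γ s T P P' Q Q' : ℝ} (hΓ₀ : 0 < Γ) (hΓ₁ : Γ ≤ 1) (hs : 1 ≤ s)
    (hP : 0 ≤ P) (hP' : 0 ≤ P') (hQ : 0 ≤ Q) (hQ' : 0 ≤ Q')
    (hcross : Γ ^ 2 * (P * Q') ≤ P' * Q) (hT : (s + Γ) ^ 2 ≤ T * (s * Γ + 1) ^ 2) :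
    (s ^ 2 * P + P') * (Q + Q') ≤ T * ((P + P') * (s ^ 2 * Q + Q')) := by
  have hs₂ : 0 ≤ s ^ 2 - 1 := by nlinarith
  have hΓ₂ : 0 ≤ 1 - Γ ^ 2 := by nlinarith
  have hsΓ : 0 < (s * Γ + 1) ^ 2 := by positivity
  have hT₁ : 1 ≤ T := by
    refine le_of_mul_le_mul_right ?_ hsΓ
    nlinarith [mul_nonneg hs₂ hΓ₂]
  have htop : s ^ 2 * P + P' ≤ T * (s ^ 2 * (P + P')) := by
    nlinarith [mul_nonneg hs₂ hP',
      mul_nonneg (sub_nonneg.2 hT₁) (by positivity : 0 ≤ s ^ 2 * (P + P'))]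
  -- the case of equality in `hcross`
  have hsharp :
      (s ^ 2 * P + P') * (Γ ^ 2 * P + P') ≤ T * ((P + P') * (s ^ 2 * Γ ^ 2 * P + P')) := by
    refine le_of_mul_le_mul_right ?_ hsΓ
    have hid : (s + Γ) ^ 2 * ((P + P') * (s ^ 2 * Γ ^ 2 * P + P'))
        - (s * Γ + 1) ^ 2 * ((s ^ 2 * P + P') * (Γ ^ 2 * P + P'))
        = (s ^ 2 - 1) * (1 - Γ ^ 2) * (s * Γ * P - P') ^ 2 := by ring
    nlinarith [mul_nonneg (mul_nonneg hs₂ hΓ₂) (sq_nonneg (s * Γ * P - P')),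
      mul_le_mul_of_nonneg_right hT (by positivity : 0 ≤ (P + P') * (s ^ 2 * Γ ^ 2 * P + P'))]
  rcases hP'.eq_or_lt with rfl | hP'₀
  · have hPQ' : P * Q' = 0 := by
      refine le_antisymm ?_ (mul_nonneg hP hQ')
      nlinarith [pow_pos hΓ₀ 2]
    nlinarith [mul_nonneg (sub_nonneg.2 hT₁) (by positivity : 0 ≤ P * (s ^ 2 * Q + Q'))]
  · refine le_of_mul_le_mul_left ?_ hP'₀
    have hid : P' * (T * ((P + P') * (s ^ 2 * Q + Q')) - (s ^ 2 * P + P') * (Q + Q'))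
        = (P' * Q - Γ ^ 2 * (P * Q')) * (T * (s ^ 2 * (P + P')) - (s ^ 2 * P + P'))
          + Q' * (T * ((P + P') * (s ^ 2 * Γ ^ 2 * P + P'))
            - (s ^ 2 * P + P') * (Γ ^ 2 * P + P')) := by
      ring
    nlinarith [mul_nonneg (sub_nonneg.2 hcross) (sub_nonneg.2 htop),
      mul_nonneg hQ' (sub_nonneg.2 hsharp)]

lemma sum_mul_sum_le_of_cross_le {ι : Type*} [Fintype ι] {p q r : ι → ℝ} {Γ s a T : ℝ}
    (hp : ∀ j, 0 ≤ p j) (hq : ∀ j, 0 ≤ q j) (hcross : ∀ j l, Γ ^ 2 * (p j * q l) ≤ p l * q j)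
    (hΓ₀ : 0 < Γ) (hΓ₁ : Γ ≤ 1) (hs : 1 ≤ s) (ha : 0 ≤ a)
    (hr : ∀ j, a ≤ r j ∧ r j ≤ a * s ^ 2) (hT : (s + Γ) ^ 2 ≤ T * (s * Γ + 1) ^ 2) :
    (∑ j, p j * r j) * ∑ j, q j ≤ T * ((∑ j, p j) * ∑ j, q j * r j) := by
  classical
  -- the difference of the two sides is linear in `r`, so it is smallest when every `r j` is
  -- at one of the two ends `a`, `a * s ^ 2`, chosen according to the sign of its coefficient
  generalize hP : ∑ j, p j = P
  generalize hQ : ∑ j, q j = Q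
  set c : ι → ℝ := fun j => T * P * q j - Q * p j
  set A := Finset.univ.filter fun j => 0 ≤ c j
  set B := Finset.univ.filter fun j => ¬ 0 ≤ c j
  have hsplit : ∀ f : ι → ℝ, ∑ j, f j = ∑ j ∈ A, f j + ∑ j ∈ B, f j := fun f =>
    (Finset.sum_filter_add_sum_filter_not _ _ _).symm
  have hc : ∀ S : Finset ι, ∑ j ∈ S, c j = T * P * ∑ j ∈ S, q j - Q * ∑ j ∈ S, p j := by
    intro S
    simp only [c, Finset.sum_sub_distrib, Finset.mul_sum]
  have hdiff : ∑ j, r j * c j = T * (P * ∑ j, q j * r j) - (∑ j, p j * r j) * Q := by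
    simp only [c, mul_sub, Finset.sum_sub_distrib, Finset.mul_sum, Finset.sum_mul]
    congr 1 <;> exact Finset.sum_congr rfl fun j _ => by ring
  have hlow : a * ∑ j ∈ A, c j + a * s ^ 2 * ∑ j ∈ B, c j ≤ ∑ j, r j * c j := by
    rw [hsplit, Finset.mul_sum, Finset.mul_sum]
    refine add_le_add (Finset.sum_le_sum fun j hj => ?_) (Finset.sum_le_sum fun j hj => ?_)
    · exact mul_le_mul_of_nonneg_right (hr j).1 (Finset.mem_filter.1 hj).2
    · exact mul_le_mul_of_nonpos_right (hr j).2 (not_le.1 (Finset.mem_filter.1 hj).2).le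
  have hcross' : Γ ^ 2 * ((∑ j ∈ B, p j) * ∑ l ∈ A, q l) ≤ (∑ l ∈ A, p l) * ∑ j ∈ B, q j := by
    calc Γ ^ 2 * ((∑ j ∈ B, p j) * ∑ l ∈ A, q l) = ∑ j ∈ B, ∑ l ∈ A, Γ ^ 2 * (p j * q l) := by
          rw [Finset.sum_mul_sum, Finset.mul_sum]; simp only [Finset.mul_sum]
      _ ≤ ∑ j ∈ B, ∑ l ∈ A, p l * q j :=
          Finset.sum_le_sum fun j _ => Finset.sum_le_sum fun l _ => hcross j l
      _ = (∑ l ∈ A, p l) * ∑ j ∈ B, q j := by rw [Finset.sum_mul_sum, Finset.sum_comm]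
  have htwo := two_level_bound hΓ₀ hΓ₁ hs (Finset.sum_nonneg fun j _ => hp j)
    (Finset.sum_nonneg fun j _ => hp j) (Finset.sum_nonneg fun j _ => hq j)
    (Finset.sum_nonneg fun j _ => hq j) hcross' hT
  rw [hc, hc, ← hP, ← hQ, hsplit p, hsplit q] at hlow
  rw [← hP, ← hQ, hsplit p, hsplit q] at hdiff ⊢
  linarith [mul_le_mul_of_nonneg_left htwo ha]

section Birkhoff

variable {N : ℕ} {A : Matrix (Fin N) (Fin N) ℝ}

lemma birkGamma_le_sqrt (hA : ∀ i j, 0 < A i j) (i j k l : Fin N) :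
    birkGamma A ≤ √(A i j * A k l / (A i l * A k j)) := by
  rw [birkGamma, if_pos hA]
  refine (ciInf_le (Set.finite_range _).bddBelow i).trans <|
    (ciInf_le (Set.finite_range _).bddBelow j).trans <|
    (ciInf_le (Set.finite_range _).bddBelow k).trans <|
    ciInf_le (Set.finite_range _).bddBelow l

variable [Nonempty (Fin N)]

lemma birkGamma_pos (hA : ∀ i j, 0 < A i j) : 0 < birkGamma A := by
  have hinf : ∀ {f : Fin N → ℝ}, (∀ i, 0 < f i) → 0 < ⨅ i, f i := fun hf =>
    exists_eq_ciInf_of_finite.elim fun i hi => hi ▸ hf i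
  rw [birkGamma, if_pos hA]
  exact hinf fun i => hinf fun j => hinf fun k => hinf fun l =>
    Real.sqrt_pos.2 (div_pos (mul_pos (hA i j) (hA k l)) (mul_pos (hA i l) (hA k j)))

lemma birkGamma_le_one (hA : ∀ i j, 0 < A i j) : birkGamma A ≤ 1 := by
  have i : Fin N := Classical.arbitrary _
  simpa [div_self (mul_pos (hA i i) (hA i i)).ne'] using birkGamma_le_sqrt hA i i i i

lemma birkGamma_sq_mul_le (hA : ∀ i j, 0 < A i j) (i j k l : Fin N) :
    birkGamma A ^ 2 * (A i l * A k j) ≤ A i j * A k l := by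
  have h := (Real.le_sqrt (birkGamma_pos hA).le
    (div_nonneg (mul_pos (hA i j) (hA k l)).le (mul_pos (hA i l) (hA k j)).le)).1
    (birkGamma_le_sqrt hA i j k l)
  rw [le_div_iff₀ (mul_pos (hA i l) (hA k j))] at h
  linarith

lemma birkTau_nonneg (hA : ∀ i j, 0 < A i j) : 0 ≤ birkTau A :=
  div_nonneg (sub_nonneg.2 (birkGamma_le_one hA)) (by linarith [birkGamma_pos hA])

lemma birkTau_lt_one (hA : ∀ i j, 0 < A i j) : birkTau A < 1 :=
  (div_lt_one (by linarith [birkGamma_pos hA])).2 (by linarith [birkGamma_pos hA])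

variable {x y : Fin N → ℝ}

theorem projDist_mulVec_le_birkTau_mul (hA : ∀ i j, 0 < A i j)
    (hx : ∀ i, 0 < x i) (hy : ∀ i, 0 < y i) :
    projDist (A *ᵥ x) (A *ᵥ y) ≤ birkTau A * projDist x y := by
  have hrow : ∀ i, ∃ j, 0 < A i j := fun i => ⟨i, hA i i⟩
  have hA₀ : ∀ i j, 0 ≤ A i j := fun i j => (hA i j).le
  set d := projDist x y
  have hΓ₀ := birkGamma_pos hA
  have hΓ₁ := birkGamma_le_one hA
  set s := Real.exp (d / 2)
  have hs : 1 ≤ s := Real.one_le_exp (by linarith [projDist_nonneg hx hy])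
  have hs₂ : s ^ 2 = Real.exp d := by rw [← Real.exp_nat_mul]; congr 1; ring
  obtain ⟨a, ha, hr⟩ := exists_forall_div_mem_Icc hx hy
  rw [← hs₂] at hr
  have hT : (s + birkGamma A) ^ 2 ≤ Real.exp (birkTau A * d) * (s * birkGamma A + 1) ^ 2 := by
    have h := add_le_mul_add_one_mul_exp hΓ₀.le hΓ₁ hs
    have hsq : Real.exp ((1 - birkGamma A) / (1 + birkGamma A) * Real.log s) ^ 2
        = Real.exp (birkTau A * d) := by
      rw [Real.log_exp, ← Real.exp_nat_mul, birkTau]; ring_nf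
    rw [← hsq, ← mul_pow, mul_comm (Real.exp _)]
    exact pow_le_pow_left₀ (by positivity) h 2
  refine (projDist_le_iff (mulVec_pos hA₀ hrow hx) (mulVec_pos hA₀ hrow hy)).2 fun i k => ?_
  have key := sum_mul_sum_le_of_cross_le (p := fun j => A i j * y j) (q := fun j => A k j * y j)
    (fun j => (mul_pos (hA i j) (hy j)).le) (fun j => (mul_pos (hA k j) (hy j)).le)
    (fun j l => by
      have := mul_le_mul_of_nonneg_right (birkGamma_sq_mul_le hA i l k j)
        (mul_pos (hy j) (hy l)).le
      linarith)
    hΓ₀ hΓ₁ hs ha.le hr hT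
  have hpr : ∀ i j, A i j * y j * (x j / y j) = A i j * x j := fun i j => by
    field_simp [(hy j).ne']
  simpa only [Matrix.mulVec, dotProduct, hpr] using key

lemma projDist_pow_mulVec_le_birkTau_pow_mul (hA : ∀ i j, 0 < A i j) (hx : ∀ i, 0 < x i)
    (hy : ∀ i, 0 < y i) (n : ℕ) :
    projDist ((A ^ n) *ᵥ x) ((A ^ n) *ᵥ y) ≤ birkTau A ^ n * projDist x y := by
  have hA₀ : ∀ i j, 0 ≤ A i j := fun i j => (hA i j).le
  have hrow : ∀ i, ∃ j, 0 < A i j := fun i => ⟨i, hA i i⟩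
  induction n with
  | zero => simp
  | succ n ih =>
    rw [pow_succ', ← Matrix.mulVec_mulVec, ← Matrix.mulVec_mulVec, pow_succ', mul_assoc]
    exact (projDist_mulVec_le_birkTau_mul hA (pow_mulVec_pos hA₀ hrow hx n)
      (pow_mulVec_pos hA₀ hrow hy n)).trans (mul_le_mul_of_nonneg_left ih (birkTau_nonneg hA))

lemma projDist_pow_mulVec_le_of_eigenvector (hA : ∀ i j, 0 < A i j) {μ : ℝ} (hμ : 0 < μ)
    {v : Fin N → ℝ} (hv : ∀ i, 0 < v i) (heig : A *ᵥ v = μ • v) (hx : ∀ i, 0 < x i) (n : ℕ) :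
    projDist ((A ^ n) *ᵥ x) v ≤ birkTau A ^ n * projDist x (A *ᵥ x) / (1 - birkTau A) := by
  have hA₀ : ∀ i j, 0 ≤ A i j := fun i j => (hA i j).le
  have hrow : ∀ i, ∃ j, 0 < A i j := fun i => ⟨i, hA i i⟩
  set z := (A ^ n) *ᵥ x
  have hz := pow_mulVec_pos hA₀ hrow hx n
  have hAz := mulVec_pos hA₀ hrow hz
  have hstep : projDist z (A *ᵥ z) ≤ birkTau A ^ n * projDist x (A *ᵥ x) := by
    simpa only [z, Matrix.mulVec_mulVec, ← pow_succ', ← pow_succ] using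
      projDist_pow_mulVec_le_birkTau_pow_mul hA hx (mulVec_pos hA₀ hrow hx) n
  have hfix : projDist (A *ᵥ z) v ≤ birkTau A * projDist z v := by
    rw [← projDist_smul_right hAz hv hμ, ← heig]
    exact projDist_mulVec_le_birkTau_mul hA hz hv
  rw [le_div_iff₀ (sub_pos.2 (birkTau_lt_one hA))]
  linarith [projDist_triangle hz hAz hv]

end Birkhoff

section Primitive

variable {N : ℕ} [Nonempty (Fin N)] {M : Matrix (Fin N) (Fin N) ℝ} {x : Fin N → ℝ}

lemma FM_iterate_eq_smul (hM : ∀ i j, 0 ≤ M i j) (hrow : ∀ i, ∃ j, 0 < M i j)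
    (hx : ∀ i, 0 < x i) (n : ℕ) : ∃ c : ℝ, 0 < c ∧ (FM M)^[n] x = c • ((M ^ n) *ᵥ x) := by
  induction n with
  | zero => exact ⟨1, one_pos, by simp⟩
  | succ n ih =>
    obtain ⟨c, hc, hcx⟩ := ih
    have hsum : 0 < ∑ j, ((M ^ (n + 1)) *ᵥ x) j :=
      Finset.sum_pos (fun j _ => pow_mulVec_pos hM hrow hx _ j) Finset.univ_nonempty
    refine ⟨(∑ j, ((M ^ (n + 1)) *ᵥ x) j)⁻¹, inv_pos.2 hsum, ?_⟩
    ext i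
    rw [Function.iterate_succ_apply', hcx, FM]
    simp only [Matrix.mulVec_smul, Pi.smul_apply, smul_eq_mul, ← Finset.mul_sum,
      Matrix.mulVec_mulVec, ← pow_succ']
    rw [mul_div_mul_left _ _ hc.ne', div_eq_inv_mul]

lemma projDist_FM_iterate (hM : ∀ i j, 0 ≤ M i j) (hrow : ∀ i, ∃ j, 0 < M i j)
    (hx : ∀ i, 0 < x i) (n : ℕ) : projDist x ((FM M)^[n] x) = projDist x ((M ^ n) *ᵥ x) := by
  obtain ⟨c, hc, hcx⟩ := FM_iterate_eq_smul hM hrow hx n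
  rw [hcx, projDist_smul_right hx (pow_mulVec_pos hM hrow hx n) hc]

lemma projDist_pow_mulVec_self_le_dMin (hM : ∀ i j, 0 ≤ M i j) (hrow : ∀ i, ∃ j, 0 < M i j)
    (hx : ∀ i, 0 < x i) (ℓ : ℕ) : projDist x ((M ^ ℓ) *ᵥ x) ≤ dMin M ℓ x := by
  have h₁ := projDist_FM_iterate hM hrow hx 1
  rw [Function.iterate_one, pow_one] at h₁
  rw [dMin, h₁, projDist_FM_iterate hM hrow hx ℓ]
  exact le_min (projDist_pow_mulVec_self_le hM hrow hx ℓ) le_rfl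

lemma projDist_pow_mulVec_le_dMin (hM : ∀ i j, 0 ≤ M i j) {ℓ : ℕ} (hℓ : 0 < ℓ)
    (hpos : ∀ i j, 0 < (M ^ ℓ) i j) {ρ : ℝ} (hρ : 0 < ρ) {v : Fin N → ℝ} (hv : ∀ i, 0 < v i)
    (heig : M *ᵥ v = ρ • v) (hx : ∀ i, 0 < x i) (m : ℕ) :
    projDist ((M ^ m) *ᵥ x) v
      ≤ birkTau (M ^ ℓ) ^ (m / ℓ) * dMin M ℓ x / (1 - birkTau (M ^ ℓ)) := by
  have hrow := exists_pos_of_pow_pos hM hℓ hpos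
  set q := m / ℓ
  set r := m % ℓ
  have hm : (M ^ m) *ᵥ x = (M ^ r) *ᵥ (((M ^ ℓ) ^ q) *ᵥ x) := by
    rw [Matrix.mulVec_mulVec, ← pow_mul, ← pow_add, Nat.mod_add_div]
  have hxq : ∀ i, 0 < (((M ^ ℓ) ^ q) *ᵥ x) i := by
    rw [← pow_mul]; exact pow_mulVec_pos hM hrow hx _
  have hrem : projDist ((M ^ m) *ᵥ x) v ≤ projDist (((M ^ ℓ) ^ q) *ᵥ x) v := by
    rw [hm, ← projDist_smul_right (pow_mulVec_pos hM hrow hxq r) hv (pow_pos hρ r),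
      ← pow_mulVec_of_mulVec_eq_smul heig]
    exact projDist_pow_mulVec_le hM hrow hxq hv r
  calc projDist ((M ^ m) *ᵥ x) v
      ≤ birkTau (M ^ ℓ) ^ q * projDist x ((M ^ ℓ) *ᵥ x) / (1 - birkTau (M ^ ℓ)) :=
        hrem.trans (projDist_pow_mulVec_le_of_eigenvector hpos (pow_pos hρ ℓ) hv
          (pow_mulVec_of_mulVec_eq_smul heig ℓ) hx q)
    _ ≤ birkTau (M ^ ℓ) ^ q * dMin M ℓ x / (1 - birkTau (M ^ ℓ)) := by
        have hτ := sub_pos.2 (birkTau_lt_one hpos)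
        have := birkTau_nonneg hpos
        gcongr
        exact projDist_pow_mulVec_self_le_dMin hM hrow hx ℓ

end Primitive

theorem power_matrix_perron_estimate_general
    {N : ℕ} (M : Matrix (Fin N) (Fin N) ℝ)
    (hMnn : ∀ i j, 0 ≤ M i j) (ℓ : ℕ) (hprim : PrimIndex M ℓ)
    (ρ : ℝ) (hρ : 0 < ρ) (v : Fin N → ℝ) (hv : v ∈ simplex N)
    (heig : M.mulVec v = ρ • v)
    (w : Fin N → ℝ) (hw : ∀ i, 0 < w i)
    (hweig : Matrix.vecMul w M = ρ • w)
    (hnorm : dotProduct w v = 1)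
    (x : Fin N → ℝ) (hx : x ∈ simplex N) (m : ℕ) (i : Fin N) :
    Real.exp (-(birkTau (M ^ ℓ) ^ (m / ℓ) * dMin M ℓ x / (1 - birkTau (M ^ ℓ)))) ≤
      (M ^ m).mulVec x i / (ρ ^ m * dotProduct w x * v i) ∧
    (M ^ m).mulVec x i / (ρ ^ m * dotProduct w x * v i) ≤
      Real.exp (birkTau (M ^ ℓ) ^ (m / ℓ) * dMin M ℓ x / (1 - birkTau (M ^ ℓ))) := by
  have : Nonempty (Fin N) := ⟨i⟩
  obtain ⟨hℓ, hpos, -⟩ := hprim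
  have hdist := projDist_pow_mulVec_le_dMin hMnn hℓ hpos hρ hv.1 heig hx.1 m
  have hwz : w ⬝ᵥ ((M ^ m) *ᵥ x) = ρ ^ m * (w ⬝ᵥ x) := by
    rw [Matrix.dotProduct_mulVec, vecMul_pow_of_vecMul_eq_smul hweig, smul_dotProduct,
      smul_eq_mul]
  obtain ⟨hlower, hupper⟩ := div_dotProduct_mul_mem_Icc
    (pow_mulVec_pos hMnn (exists_pos_of_pow_pos hMnn hℓ hpos) hx.1 m) hv.1 (fun k => (hw k).le)
    hnorm i
  rw [hwz] at hlower hupper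
  exact ⟨(Real.exp_le_exp.2 (neg_le_neg hdist)).trans hlower,
    hupper.trans (Real.exp_le_exp.2 hdist)⟩

/-- entrywise estimate of the powers of a primitive matrix:
`(M^m x)(i) = ρ_M^m (w_M⊤x) v_M(i) · exp(± τ^{⌊m/ℓ⌋} d_M(x)/(1−τ))`. -/
theorem power_matrix_perron_estimate
    {N : ℕ} (hN : 0 < N) (M : Matrix (Fin N) (Fin N) ℝ)
    (hMnn : ∀ i j, 0 ≤ M i j) (ℓ : ℕ) (hprim : PrimIndex M ℓ)
    (ρ : ℝ) (hρ : 0 < ρ) (v : Fin N → ℝ) (hv : v ∈ simplex N)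
    (heig : M.mulVec v = ρ • v)
    (w : Fin N → ℝ) (hw : ∀ i, 0 < w i)
    (hweig : Matrix.vecMul w M = ρ • w)
    (hnorm : dotProduct w v = 1)
    (x : Fin N → ℝ) (hx : x ∈ simplex N) (m : ℕ) (i : Fin N) :
    Real.exp (-(birkTau (M ^ ℓ) ^ (m / ℓ) * dMin M ℓ x / (1 - birkTau (M ^ ℓ)))) ≤
      (M ^ m).mulVec x i / (ρ ^ m * dotProduct w x * v i) ∧
    (M ^ m).mulVec x i / (ρ ^ m * dotProduct w x * v i) ≤
      Real.exp (birkTau (M ^ ℓ) ^ (m / ℓ) * dMin M ℓ x / (1 - birkTau (M ^ ℓ))) :=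
  power_matrix_perron_estimate_general M hMnn ℓ hprim ρ hρ v hv heig w hw hweig hnorm x hx m i

end PerronApprox
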